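/- Let (ξ₁,η₁),…,(ξₙ,ηₙ) be i.i.d. pairs of square-integrable ℝ^d-valued random variables, with each ξᵢ of law μ and each ηᵢ of law ν, and let w be a modulus of continuity. Then E[ w( W₂( (1/n) Σᵢ δ_{ξᵢ}, (1/n) Σᵢ δ_{ηᵢ} ) ) ] ≤ w( ‖ξ₁ − η₁‖_{L²} ). -/

import Mathlib

open MeasureTheory ProbabilityTheory ENNReal Filter

noncomputable section

abbrev Ed (d : ℕ) := EuclideanSpace ℝ (Fin d)

def Couplings {d : ℕ} (μ ν : Measure (Ed d)) : Set (Measure (Ed d × Ed d)) :=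
  {π | IsProbabilityMeasure π ∧ π.map Prod.fst = μ ∧ π.map Prod.snd = ν}

/-- The 2-Wasserstein distance (valued in `ℝ≥0∞`). -/
def W2 {d : ℕ} (μ ν : Measure (Ed d)) : ℝ≥0∞ :=
  ⨅ π ∈ Couplings μ ν, (∫⁻ p, (‖p.1 - p.2‖₊ : ℝ≥0∞) ^ 2 ∂π) ^ (1/2 : ℝ)

def HasFiniteSecondMoment {d : ℕ} (μ : Measure (Ed d)) : Prop :=
  ∫⁻ x, (‖x‖₊ : ℝ≥0∞) ^ 2 ∂μ ≠ ⊤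

def uniformOn01 : Measure ℝ := volume.restrict (Set.Icc (0:ℝ) 1)

def IsModulus (w : ℝ → ℝ) : Prop :=
  ContinuousOn w (Set.Ici 0) ∧ MonotoneOn w (Set.Ici 0) ∧
    ConcaveOn ℝ (Set.Ici 0) w ∧ w 0 = 0 ∧ ∀ x ∈ Set.Ici (0:ℝ), 0 ≤ w x

-- auxiliary: empirical coupling bound
lemma W2_emp_le {d n : ℕ} (hn : 0 < n) (x y : Fin n → Ed d) :
    W2 ((n : ℝ≥0∞)⁻¹ • ∑ i, Measure.dirac (x i)) ((n : ℝ≥0∞)⁻¹ • ∑ i, Measure.dirac (y i))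
      ≤ ((n : ℝ≥0∞)⁻¹ * ∑ i, (‖x i - y i‖₊ : ℝ≥0∞) ^ 2) ^ (1/2 : ℝ) := by
  have hn0 : (n : ℝ≥0∞) ≠ 0 := by exact_mod_cast Nat.cast_ne_zero.2 hn.ne'
  set π : Measure (Ed d × Ed d) := (n : ℝ≥0∞)⁻¹ • ∑ i, Measure.dirac (x i, y i) with hπ
  have hmapfst : π.map Prod.fst = (n : ℝ≥0∞)⁻¹ • ∑ i, Measure.dirac (x i) := by
    rw [hπ, Measure.map_smul, ← Measure.sum_fintype,
      Measure.map_sum measurable_fst.aemeasurable]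
    simp [Measure.map_dirac' measurable_fst, Measure.sum_fintype]
  have hmapsnd : π.map Prod.snd = (n : ℝ≥0∞)⁻¹ • ∑ i, Measure.dirac (y i) := by
    rw [hπ, Measure.map_smul, ← Measure.sum_fintype,
      Measure.map_sum measurable_snd.aemeasurable]
    simp [Measure.map_dirac' measurable_snd, Measure.sum_fintype]
  have hprob : IsProbabilityMeasure π := by
    constructor
    rw [hπ]
    simp [Measure.smul_apply, Measure.finset_sum_apply, smul_eq_mul,
      ENNReal.inv_mul_cancel hn0 (natCast_ne_top n)]
  have hmem : π ∈ Couplings ((n : ℝ≥0∞)⁻¹ • ∑ i, Measure.dirac (x i))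
      ((n : ℝ≥0∞)⁻¹ • ∑ i, Measure.dirac (y i)) := ⟨hprob, hmapfst, hmapsnd⟩
  have hle := iInf₂_le (f := fun π _ =>
    (∫⁻ p, (‖p.1 - p.2‖₊ : ℝ≥0∞) ^ 2 ∂π) ^ (1/2 : ℝ)) π hmem
  refine hle.trans (le_of_eq ?_)
  congr 1
  rw [hπ, lintegral_smul_measure, lintegral_finset_sum_measure]
  congr 1
  refine Finset.sum_congr rfl fun i _ => ?_
  exact lintegral_dirac' _ (by measurability)

lemma modulus_linear_growth {w : ℝ → ℝ} (hw : IsModulus w) {t : ℝ} (ht : 0 ≤ t) :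
    w t ≤ w 1 * (1 + t) := by
  obtain ⟨hc, hm, hcc, h0, hnn⟩ := hw
  have hw1 : 0 ≤ w 1 := hnn 1 (by norm_num)
  rcases le_or_gt t 1 with h | h
  · have := hm ht (by norm_num : (1:ℝ) ∈ Set.Ici 0) h
    nlinarith
  · have ht0 : t ≠ 0 := by linarith
    have h2 := hcc.2
    have hkey := h2 (x := t) (y := 0) (Set.mem_Ici.2 (by linarith))
      (Set.mem_Ici.2 le_rfl) (a := t⁻¹) (b := 1 - t⁻¹)
      (by positivity) (by rw [sub_nonneg, inv_le_one_iff₀]; right; linarith)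
      (by ring)
    rw [smul_eq_mul, smul_eq_mul, smul_eq_mul, smul_eq_mul, mul_zero, add_zero,
      inv_mul_cancel₀ ht0, h0, mul_zero, add_zero] at hkey
    -- hkey : t⁻¹ * w t ≤ w 1
    have : w t ≤ t * w 1 := by
      calc w t = t * (t⁻¹ * w t) := by field_simp
        _ ≤ t * w 1 := mul_le_mul_of_nonneg_left hkey (by linarith)
    nlinarith

theorem stmt11 {Ω : Type*} [MeasurableSpace Ω] (P : Measure Ω) [IsProbabilityMeasure P]
    {d : ℕ} (n : ℕ) (hn : 0 < n) (μ ν : Measure (Ed d))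
    (ξ η : Fin n → Ω → Ed d)
    (hξmeas : ∀ i, Measurable (ξ i)) (hηmeas : ∀ i, Measurable (η i))
    (hξ2 : ∀ i, MemLp (ξ i) 2 P) (hη2 : ∀ i, MemLp (η i) 2 P)
    (hξlaw : ∀ i, P.map (ξ i) = μ) (hηlaw : ∀ i, P.map (η i) = ν)
    -- the pairs (ξᵢ, ηᵢ) are independent
    (hindep : iIndepFun (fun i ω => (ξ i ω, η i ω)) P)
    -- and identically distributed
    (hid : ∀ i, P.map (fun ω => (ξ i ω, η i ω)) = P.map (fun ω => (ξ ⟨0, hn⟩ ω, η ⟨0, hn⟩ ω)))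
    (w : ℝ → ℝ) (hw : IsModulus w) :
    ∫ ω, w (W2 ((n : ℝ≥0∞)⁻¹ • ∑ i, Measure.dirac (ξ i ω))
               ((n : ℝ≥0∞)⁻¹ • ∑ i, Measure.dirac (η i ω))).toReal ∂P
      ≤ w (eLpNorm (fun ω => ξ ⟨0, hn⟩ ω - η ⟨0, hn⟩ ω) 2 P).toReal := by
  obtain ⟨hwc, hwm, hwcc, hw0, hwnn⟩ := id hw
  set i0 : Fin n := ⟨0, hn⟩ with hi0
  set f : Ω → Ed d := fun ω => ξ i0 ω - η i0 ω with hf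
  set wb : ℝ → ℝ := fun x => w (max x 0) with hwbdef
  have hwb_cont : Continuous wb :=
    hwc.comp_continuous (continuous_id.max continuous_const) (fun x => Set.mem_Ici.2 (le_max_right _ _))
  have hwb_eq : ∀ x, 0 ≤ x → wb x = w x := fun x hx => by
    simp only [hwbdef, max_eq_left hx]
  set S : Ω → ℝ := fun ω => (n:ℝ)⁻¹ * ∑ i, ‖ξ i ω - η i ω‖^2 with hSdef
  have hS_meas : Measurable S := by
    apply Measurable.const_mul
    exact Finset.measurable_sum _ fun i _ =>
      (((hξmeas i).sub (hηmeas i)).norm.pow measurable_const)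
  have hS_nonneg : ∀ ω, 0 ≤ S ω := fun ω => by positivity
  have hterm_int : ∀ i, Integrable (fun ω => ‖ξ i ω - η i ω‖^2) P := by
    intro i
    have h2 := ((hξ2 i).sub (hη2 i)).integrable_norm_rpow two_ne_zero ENNReal.ofNat_ne_top
    have : ∀ ω, ‖ξ i ω - η i ω‖ ^ ((2:ℝ≥0∞).toReal) = ‖ξ i ω - η i ω‖^2 := by
      intro ω
      rw [ENNReal.toReal_ofNat]
      rw [show (2:ℝ) = ((2:ℕ):ℝ) by norm_num, Real.rpow_natCast]
    exact h2.congr (ae_of_all _ this)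
  have hS_int : Integrable S P := by
    apply Integrable.const_mul
    exact integrable_finset_sum _ (fun i _ => hterm_int i)
  have hsqrt_meas : Measurable (fun ω => Real.sqrt (S ω)) :=
    Real.continuous_sqrt.measurable.comp hS_meas
  have hsqrt_int : Integrable (fun ω => Real.sqrt (S ω)) P := by
    refine Integrable.mono' ((integrable_const (1:ℝ)).add hS_int)
      hsqrt_meas.aestronglyMeasurable (ae_of_all _ fun ω => ?_)
    rw [Real.norm_of_nonneg (Real.sqrt_nonneg _)]
    have h1 : S ω ≤ (1 + S ω)^2 := by nlinarith [hS_nonneg ω]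
    calc Real.sqrt (S ω) ≤ Real.sqrt ((1 + S ω)^2) := Real.sqrt_le_sqrt h1
      _ = 1 + S ω := Real.sqrt_sq (by nlinarith [hS_nonneg ω])
  have hwbs_int : Integrable (fun ω => wb (Real.sqrt (S ω))) P := by
    have hb : Integrable (fun ω => |w 1| * (1 + Real.sqrt (S ω))) P :=
      ((integrable_const (1:ℝ)).add hsqrt_int).const_mul _
    refine hb.mono' ((hwb_cont.measurable.comp hsqrt_meas).aestronglyMeasurable)
      (ae_of_all _ fun ω => ?_)
    have hs := Real.sqrt_nonneg (S ω)
    rw [hwb_eq _ hs, Real.norm_of_nonneg (hwnn _ hs)]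
    calc w (Real.sqrt (S ω)) ≤ w 1 * (1 + Real.sqrt (S ω)) := modulus_linear_growth hw hs
      _ ≤ |w 1| * (1 + Real.sqrt (S ω)) :=
          mul_le_mul_of_nonneg_right (le_abs_self _) (by positivity)
  have hptw : ∀ ω, w (W2 ((n : ℝ≥0∞)⁻¹ • ∑ i, Measure.dirac (ξ i ω))
      ((n : ℝ≥0∞)⁻¹ • ∑ i, Measure.dirac (η i ω))).toReal ≤ wb (Real.sqrt (S ω)) := by
    intro ω
    have hb := W2_emp_le hn (fun i => ξ i ω) (fun i => η i ω)
    set T : ℝ≥0∞ := ((n : ℝ≥0∞)⁻¹ * ∑ i, (‖ξ i ω - η i ω‖₊ : ℝ≥0∞) ^ 2) with hT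
    have hT_ne : T ≠ ⊤ := by
      rw [hT]
      refine ENNReal.mul_ne_top (ENNReal.inv_ne_top.2 (by exact_mod_cast hn.ne')) ?_
      exact (ENNReal.sum_lt_top.2 fun i _ => ENNReal.pow_lt_top ENNReal.coe_lt_top).ne
    have hT_rne : T ^ (1/2:ℝ) ≠ ⊤ := ENNReal.rpow_ne_top_of_nonneg (by norm_num) hT_ne
    have h1 : (W2 ((n : ℝ≥0∞)⁻¹ • ∑ i, Measure.dirac (ξ i ω))
        ((n : ℝ≥0∞)⁻¹ • ∑ i, Measure.dirac (η i ω))).toReal ≤ (T ^ (1/2:ℝ)).toReal :=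
      ENNReal.toReal_mono hT_rne hb
    have hTR : T.toReal = S ω := by
      rw [hT, hSdef, ENNReal.toReal_mul, ENNReal.toReal_inv, ENNReal.toReal_natCast]
      congr 1
      rw [ENNReal.toReal_sum (fun i _ => (ENNReal.pow_lt_top ENNReal.coe_lt_top).ne)]
      refine Finset.sum_congr rfl fun i _ => ?_
      rw [ENNReal.toReal_pow, ENNReal.coe_toReal, coe_nnnorm]
    have h2 : (T ^ (1/2:ℝ)).toReal = Real.sqrt (S ω) := by
      rw [← ENNReal.toReal_rpow, hTR, Real.sqrt_eq_rpow]
    rw [hwb_eq _ (Real.sqrt_nonneg _)]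
    exact hwm (Set.mem_Ici.2 ENNReal.toReal_nonneg) (Set.mem_Ici.2 (Real.sqrt_nonneg _))
      (h2 ▸ h1)
  have hI1 : ∫ ω, w (W2 ((n : ℝ≥0∞)⁻¹ • ∑ i, Measure.dirac (ξ i ω))
      ((n : ℝ≥0∞)⁻¹ • ∑ i, Measure.dirac (η i ω))).toReal ∂P
      ≤ ∫ ω, wb (Real.sqrt (S ω)) ∂P :=
    integral_mono_of_nonneg (ae_of_all _ fun ω => hwnn _ (Set.mem_Ici.2 ENNReal.toReal_nonneg))
      hwbs_int (ae_of_all _ hptw)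
  have hwb_cc : ConcaveOn ℝ (Set.Ici 0) wb := hwcc.congr (fun x hx => (hwb_eq x hx).symm)
  have hJ1 : ∫ ω, wb (Real.sqrt (S ω)) ∂P ≤ wb (∫ ω, Real.sqrt (S ω) ∂P) :=
    hwb_cc.le_map_integral hwb_cont.continuousOn isClosed_Ici
      (ae_of_all _ fun ω => Set.mem_Ici.2 (Real.sqrt_nonneg _)) hsqrt_int hwbs_int
  have hJ2 : ∫ ω, Real.sqrt (S ω) ∂P ≤ Real.sqrt (∫ ω, S ω ∂P) :=
    (Real.strictConcaveOn_sqrt.concaveOn).le_map_integral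
      Real.continuous_sqrt.continuousOn isClosed_Ici
      (ae_of_all _ fun ω => Set.mem_Ici.2 (hS_nonneg ω)) hS_int hsqrt_int
  have hmono2 : wb (∫ ω, Real.sqrt (S ω) ∂P) ≤ wb (Real.sqrt (∫ ω, S ω ∂P)) := by
    have h0' : 0 ≤ ∫ ω, Real.sqrt (S ω) ∂P := integral_nonneg fun ω => Real.sqrt_nonneg _
    rw [hwb_eq _ h0', hwb_eq _ (Real.sqrt_nonneg _)]
    exact hwm (Set.mem_Ici.2 h0') (Set.mem_Ici.2 (Real.sqrt_nonneg _)) hJ2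
  have hident : ∀ i : Fin n, ∫ ω, ‖ξ i ω - η i ω‖^2 ∂P = ∫ ω, ‖f ω‖^2 ∂P := by
    intro i
    have hmi : Measurable (fun ω => (ξ i ω, η i ω)) := (hξmeas i).prodMk (hηmeas i)
    have hm0 : Measurable (fun ω => (ξ i0 ω, η i0 ω)) := (hξmeas i0).prodMk (hηmeas i0)
    have hφ : Continuous (fun p : Ed d × Ed d => ‖p.1 - p.2‖^2) := by continuity
    calc ∫ ω, ‖ξ i ω - η i ω‖^2 ∂P
        = ∫ p, ‖p.1 - p.2‖^2 ∂(P.map (fun ω => (ξ i ω, η i ω))) :=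
          (integral_map hmi.aemeasurable hφ.aestronglyMeasurable).symm
      _ = ∫ p, ‖p.1 - p.2‖^2 ∂(P.map (fun ω => (ξ i0 ω, η i0 ω))) := by rw [hid i]
      _ = ∫ ω, ‖f ω‖^2 ∂P := integral_map hm0.aemeasurable hφ.aestronglyMeasurable
  have hIS : ∫ ω, S ω ∂P = ∫ ω, ‖f ω‖^2 ∂P := by
    simp only [hSdef]
    rw [integral_const_mul, integral_finset_sum _ (fun i _ => hterm_int i)]
    simp_rw [hident]
    rw [Finset.sum_const, Finset.card_univ, Fintype.card_fin, nsmul_eq_mul]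
    rw [← mul_assoc, inv_mul_cancel₀ (by exact_mod_cast hn.ne' : (n:ℝ) ≠ 0), one_mul]
  have hfinal : Real.sqrt (∫ ω, ‖f ω‖^2 ∂P) = (eLpNorm f 2 P).toReal := by
    have hf2 : MemLp f 2 P := (hξ2 i0).sub (hη2 i0)
    rw [hf2.eLpNorm_eq_integral_rpow_norm two_ne_zero ENNReal.ofNat_ne_top,
      ENNReal.toReal_ofReal (by positivity), ENNReal.toReal_ofNat, Real.sqrt_eq_rpow]
    norm_num
  calc ∫ ω, w (W2 ((n : ℝ≥0∞)⁻¹ • ∑ i, Measure.dirac (ξ i ω))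
      ((n : ℝ≥0∞)⁻¹ • ∑ i, Measure.dirac (η i ω))).toReal ∂P
      ≤ ∫ ω, wb (Real.sqrt (S ω)) ∂P := hI1
    _ ≤ wb (∫ ω, Real.sqrt (S ω) ∂P) := hJ1
    _ ≤ wb (Real.sqrt (∫ ω, S ω ∂P)) := hmono2
    _ = w ((eLpNorm f 2 P).toReal) := by
        rw [hIS, hfinal, hwb_eq _ ENNReal.toReal_nonneg]
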